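/- arXiv:2211.11091 — 3 statements merged into one kernel-verified Lean document; each statement's English description precedes it below -/
import Mathlib

section
/- Assume char(k) = 0. Let M and M' be monomials in k[x_1,…,x_n] with M' < M in the lexicographic order with x_1 > x_2 > … > x_n. Then for every m-tuple k = (k_1,…,k_m) ∈ ℕ^m for which Pol_k(M) and Pol_k(M') are nonzero, the leading monomial of Pol_k(M') is strictly smaller than the leading monomial of Pol_k(M) with respect to the lexicographic order on k[x_i^{(j)}] given by the variable ordering x_1^{(1)} > x_2^{(1)} > … > x_n^{(1)} > x_1^{(2)} > x_2^{(2)} > … > x_n^{(2)} > … > x_n^{(m)}. -/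
/-!
Over `ℕ` nothing cancels: `x^E` occurs in `Pol_κ(x^a)` exactly when `E` is a transport matrix
with row sums `E(·, i)` equal to `a i` and column sums `E(j, ·)` equal to `κ j`. For the order
`x₁^{(1)} > ⋯ > xₙ^{(1)} > x₁^{(2)} > ⋯` the lex-largest such matrix is the one produced greedily
by the northwest corner rule: cut `[0, |a|)` into consecutive blocks of lengths `a i` and,
independently, of lengths `κ j`, and let the `(j, i)` entry be the overlap of the `i`-th and the
`j`-th block. If `a' < a` first differ at `i₀`, the `i₀`-th block of `a'` ends strictly earlier than
that of `a`; the two greedy matrices agree up to the cell `(j₀, i₀)`, where `j₀` is the `κ`-block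
containing that endpoint, and there the one of `a'` is smaller. In characteristic zero the passage
from `ℕ` to `k` changes no support.
-/

open MvPolynomial

/-- The polarization `Pol_κ(f)`: the coefficient of `t₁^{κ₁} ⋯ t_m^{κ_m}` in `Φ(f)` where
`Φ : k[x₁,…,xₙ] → k[x_i^{(j)}][t₁,…,t_m]` is the algebra map sending `x_i ↦ Σ_j x_i^{(j)} t_j`.
The variables `x_i^{(j)}` are indexed by `emb i j : σ`. -/
noncomputable def Pol {k : Type*} [CommSemiring k] {n m : ℕ} {σ : Type*}
    (emb : Fin n → Fin m → σ) (f : MvPolynomial (Fin n) k) (κ : Fin m → ℕ) :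
    MvPolynomial σ k :=
  MvPolynomial.coeff (Finsupp.equivFunOnFinite.symm κ)
    (MvPolynomial.aeval
      (fun i => ∑ j : Fin m, (MvPolynomial.C (MvPolynomial.X (emb i j)) * MvPolynomial.X j :
        MvPolynomial (Fin m) (MvPolynomial σ k))) f)

/-- The leading monomial (exponent vector) of a polynomial with respect to the lexicographic
order where variables with smaller index in `σ` are larger (junk value `0` for `f = 0`). -/
noncomputable def leadM {k : Type*} [CommSemiring k] {σ : Type*}
    [LinearOrder σ] (f : MvPolynomial σ k) : Lex (σ →₀ ℕ) :=
  letI : DecidableEq (Lex (σ →₀ ℕ)) := Classical.decEq _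
  WithBot.unbotD (toLex 0) ((f.support.image (toLex : (σ →₀ ℕ) → Lex (σ →₀ ℕ))).max)

section General

variable {R S σ : Type*} [CommSemiring R] [CommSemiring S] {n m : ℕ}

theorem Pol_map (f : R →+* S) (emb : Fin n → Fin m → σ) (p : MvPolynomial (Fin n) R)
    (κ : Fin m → ℕ) : Pol emb (map f p) κ = map f (Pol emb p κ) := by
  rw [Pol, Pol, ← coeff_map]
  congr 1
  induction p using MvPolynomial.induction_on with
  | C r => simp
  | add p q hp hq => simp [hp, hq]
  | mul_X p i hp => simp [hp]

theorem coeff_Pol_X_mul (emb : Fin n → Fin m → σ) (i : Fin n)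
    (p : MvPolynomial (Fin n) R) (κ : Fin m → ℕ) (E : σ →₀ ℕ) :
    coeff E (Pol emb (X i * p) κ) =
      ∑ j, if κ j ≠ 0 ∧ E (emb i j) ≠ 0 then
        coeff (E - Finsupp.single (emb i j) 1) (Pol emb p (κ - Pi.single j 1)) else 0 := by
  classical
  have hsub (j : Fin m) : Finsupp.equivFunOnFinite.symm κ - Finsupp.single j 1 =
      Finsupp.equivFunOnFinite.symm (κ - Pi.single j 1) := by
    ext; simp [Finsupp.single_eq_pi_single]
  simp only [Pol, map_mul, aeval_X, Finset.sum_mul, coeff_sum, mul_assoc, coeff_C_mul,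
    coeff_X_mul', Finsupp.mem_support_iff, hsub]
  refine Finset.sum_congr rfl fun j _ ↦ ?_
  split_ifs <;> simp_all

variable [LinearOrder σ]

theorem leadM_map_of_injective {f : R →+* S} (hf : Function.Injective f) (p : MvPolynomial σ R) :
    leadM (map f p) = leadM p := by
  simp only [leadM, support_map_of_injective p hf]

theorem leadM_eq_of_forall_le {p : MvPolynomial σ R} {d : σ →₀ ℕ} (hd : d ∈ p.support)
    (hle : ∀ e ∈ p.support, toLex e ≤ toLex d) : leadM p = toLex d := by
  classical
  have hmax : (p.support.image toLex).max = ((toLex d : Lex (σ →₀ ℕ)) : WithBot _) :=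
    le_antisymm
      (Finset.max_le fun _ hx ↦ by
        obtain ⟨e, he, rfl⟩ := Finset.mem_image.mp hx
        exact WithBot.coe_le_coe.mpr (hle e he))
      (Finset.le_max (Finset.mem_image_of_mem _ hd))
  simp only [leadM]
  convert congrArg (WithBot.unbotD (toLex 0)) hmax
  rfl

end General

section PartialSum

variable {p : ℕ}

def partialSum (f : Fin p → ℕ) (t : ℕ) : ℕ :=
  ∑ s ∈ Finset.range t, if h : s < p then f ⟨s, h⟩ else 0

@[simp]
theorem partialSum_zero (f : Fin p → ℕ) : partialSum f 0 = 0 := rfl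

theorem partialSum_mono (f : Fin p → ℕ) : Monotone (partialSum f) :=
  fun _ _ h ↦ Finset.sum_le_sum_of_subset (Finset.range_subset_range.mpr h)

theorem partialSum_succ (f : Fin p → ℕ) (i : Fin p) :
    partialSum f (i + 1) = partialSum f i + f i := by
  rw [partialSum, Finset.sum_range_succ, dif_pos i.isLt]
  rfl

theorem partialSum_self (f : Fin p → ℕ) : partialSum f p = ∑ i, f i := by
  rw [partialSum, ← Fin.sum_univ_eq_sum_range]
  exact Finset.sum_congr rfl fun i _ ↦ dif_pos i.isLt

theorem partialSum_congr {f g : Fin p → ℕ} {t : ℕ} (h : ∀ i : Fin p, (i : ℕ) < t → f i = g i) :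
    partialSum f t = partialSum g t := by
  refine Finset.sum_congr rfl fun s hs ↦ ?_
  split_ifs with hsp
  · exact h _ (Finset.mem_range.mp hs)
  · rfl

theorem exists_partialSum_le_lt {f : Fin p → ℕ} {x : ℕ} (hx : x < partialSum f p) :
    ∃ j : Fin p, partialSum f j ≤ x ∧ x < partialSum f (j + 1) := by
  classical
  have hex : ∃ t, x < partialSum f t := ⟨p, hx⟩
  obtain ⟨t, ht⟩ : ∃ t, Nat.find hex = t + 1 :=
    Nat.exists_eq_succ_of_ne_zero fun h ↦ by simpa [h] using Nat.find_spec hex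
  have htp : t < p := by
    have := Nat.find_min' hex hx
    omega
  refine ⟨⟨t, htp⟩, not_lt.mp (Nat.find_min hex (by rw [ht]; exact t.lt_succ_self)), ?_⟩
  simpa [ht] using Nat.find_spec hex

theorem partialSum_overlap (f : Fin p → ℕ) {x y : ℕ} (hxy : x ≤ y) {J : ℕ} (hJ : J ≤ p) :
    partialSum (fun j : Fin p ↦ min y (partialSum f (j + 1)) - max x (partialSum f j)) J =
      min y (partialSum f J) - x := by
  induction J with
  | zero => simp
  | succ J ih =>
    have hmono := partialSum_mono f (Nat.le_add_right J 1)
    rw [partialSum_succ _ ⟨J, hJ⟩, ih (by omega)]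
    dsimp only
    omega

end PartialSum

namespace TransportMatrix

variable {m n : ℕ}

def rowSum (E : Lex (Fin m × Fin n) →₀ ℕ) (i : Fin n) : ℕ := ∑ j, E (toLex (j, i))

def colSum (E : Lex (Fin m × Fin n) →₀ ℕ) (j : Fin m) : ℕ := ∑ i, E (toLex (j, i))

def HasMargins (E : Lex (Fin m × Fin n) →₀ ℕ) (r : Fin n → ℕ) (c : Fin m → ℕ) : Prop :=
  rowSum E = r ∧ colSum E = c

theorem rowSum_add (E F : Lex (Fin m × Fin n) →₀ ℕ) : rowSum (E + F) = rowSum E + rowSum F := by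
  ext i
  simp [rowSum, Finset.sum_add_distrib]

theorem colSum_add (E F : Lex (Fin m × Fin n) →₀ ℕ) : colSum (E + F) = colSum E + colSum F := by
  ext j
  simp [colSum, Finset.sum_add_distrib]

theorem rowSum_single (j : Fin m) (i : Fin n) (c : ℕ) :
    rowSum (Finsupp.single (toLex (j, i)) c) = Pi.single i c := by
  classical
  ext i'
  simp [rowSum, Finsupp.single_apply, Pi.single_apply, eq_comm, ite_and]

theorem colSum_single (j : Fin m) (i : Fin n) (c : ℕ) :
    colSum (Finsupp.single (toLex (j, i)) c) = Pi.single j c := by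
  classical
  ext j'
  simp [colSum, Finsupp.single_apply, Pi.single_apply, eq_comm, ite_and]

theorem le_rowSum (E : Lex (Fin m × Fin n) →₀ ℕ) (j : Fin m) (i : Fin n) :
    E (toLex (j, i)) ≤ rowSum E i :=
  Finset.single_le_sum (f := fun j ↦ E (toLex (j, i))) (fun _ _ ↦ Nat.zero_le _)
    (Finset.mem_univ j)

theorem le_colSum (E : Lex (Fin m × Fin n) →₀ ℕ) (j : Fin m) (i : Fin n) :
    E (toLex (j, i)) ≤ colSum E j :=
  Finset.single_le_sum (f := fun i ↦ E (toLex (j, i))) (fun _ _ ↦ Nat.zero_le _)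
    (Finset.mem_univ i)

theorem HasMargins.sum_eq {E : Lex (Fin m × Fin n) →₀ ℕ} {r : Fin n → ℕ} {c : Fin m → ℕ}
    (h : HasMargins E r c) : ∑ i, r i = ∑ j, c j := by
  rw [← h.1, ← h.2]
  exact Finset.sum_comm

theorem hasMargins_zero_iff (E : Lex (Fin m × Fin n) →₀ ℕ) (c : Fin m → ℕ) :
    HasMargins E 0 c ↔ E = 0 ∧ c = 0 := by
  constructor
  · rintro ⟨hr, hc⟩
    have hE : E = 0 := by
      ext s
      simpa [hr] using le_rowSum E (ofLex s).1 (ofLex s).2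
    refine ⟨hE, ?_⟩
    rw [← hc, hE]
    ext j
    simp [colSum]
  · rintro ⟨rfl, rfl⟩
    constructor <;> ext <;> simp [rowSum, colSum]

theorem hasMargins_single_add_iff (E : Lex (Fin m × Fin n) →₀ ℕ) (r : Fin n → ℕ) (c : Fin m → ℕ)
    (j : Fin m) (i : Fin n) :
    HasMargins (Finsupp.single (toLex (j, i)) 1 + E) (Pi.single i 1 + r) (Pi.single j 1 + c) ↔
      HasMargins E r c := by
  simp only [HasMargins, rowSum_add, colSum_add, rowSum_single, colSum_single, add_right_inj]

theorem hasMargins_pi_single_add_iff (E : Lex (Fin m × Fin n) →₀ ℕ) (r : Fin n → ℕ)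
    (c : Fin m → ℕ) (i : Fin n) :
    HasMargins E (Pi.single i 1 + r) c ↔ ∃ j, (c j ≠ 0 ∧ E (toLex (j, i)) ≠ 0) ∧
      HasMargins (E - Finsupp.single (toLex (j, i)) 1) r (c - Pi.single j 1) := by
  have peel (j : Fin m) (hc : c j ≠ 0) (hE : E (toLex (j, i)) ≠ 0) :
      HasMargins E (Pi.single i 1 + r) c ↔
        HasMargins (E - Finsupp.single (toLex (j, i)) 1) r (c - Pi.single j 1) := by
    have hcj : c = Pi.single j 1 + (c - Pi.single j 1) := by
      ext j'
      rcases eq_or_ne j' j with rfl | h <;> simp [*]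
      omega
    rw [← hasMargins_single_add_iff _ r _ j i, ← hcj,
      add_tsub_cancel_of_le (Finsupp.single_le_iff.mpr (Nat.one_le_iff_ne_zero.mpr hE))]
  constructor
  · intro h
    have hrow : rowSum E i ≠ 0 := by simp [h.1]
    obtain ⟨j, -, hE⟩ := Finset.exists_ne_zero_of_sum_ne_zero hrow
    have hc : c j ≠ 0 := by
      rw [← h.2]
      exact (Nat.pos_of_ne_zero hE).trans_le (le_colSum E j i) |>.ne'
    exact ⟨j, ⟨hc, hE⟩, (peel j hc hE).1 h⟩
  · rintro ⟨j, ⟨hc, hE⟩, h⟩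
    exact (peel j hc hE).2 h

/-- The northwest corner rule: cut `[0, N)` into consecutive blocks of lengths `r i` and,
separately, of lengths `c j`; the `(j, i)` entry is the length of the overlap of the `i`-th
`r`-block with the `j`-th `c`-block. -/
noncomputable def northwestCorner (r : Fin n → ℕ) (c : Fin m → ℕ) : Lex (Fin m × Fin n) →₀ ℕ :=
  Finsupp.equivFunOnFinite.symm fun s ↦
    min (partialSum r ((ofLex s).2 + 1)) (partialSum c ((ofLex s).1 + 1)) -
      max (partialSum r (ofLex s).2) (partialSum c (ofLex s).1)

theorem northwestCorner_apply (r : Fin n → ℕ) (c : Fin m → ℕ) (j : Fin m) (i : Fin n) :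
    northwestCorner r c (toLex (j, i)) =
      min (partialSum r (i + 1)) (partialSum c (j + 1)) - max (partialSum r i) (partialSum c j) :=
  rfl

theorem partialSum_northwestCorner_row (r : Fin n → ℕ) (c : Fin m → ℕ) (i : Fin n) {J : ℕ}
    (hJ : J ≤ m) :
    partialSum (fun j ↦ northwestCorner r c (toLex (j, i))) J =
      min (partialSum r (i + 1)) (partialSum c J) - partialSum r i := by
  simp only [northwestCorner_apply]
  exact partialSum_overlap c (partialSum_mono r (Nat.le_add_right _ 1)) hJ

theorem partialSum_northwestCorner_col (r : Fin n → ℕ) (c : Fin m → ℕ) (j : Fin m) {I : ℕ}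
    (hI : I ≤ n) :
    partialSum (fun i ↦ northwestCorner r c (toLex (j, i))) I =
      min (partialSum c (j + 1)) (partialSum r I) - partialSum c j := by
  simp only [northwestCorner_apply, min_comm (partialSum r _), max_comm (partialSum r _)]
  exact partialSum_overlap r (partialSum_mono c (Nat.le_add_right _ 1)) hI

theorem hasMargins_northwestCorner {r : Fin n → ℕ} {c : Fin m → ℕ} (h : ∑ i, r i = ∑ j, c j) :
    HasMargins (northwestCorner r c) r c := by
  constructor
  · ext i
    have hsucc := partialSum_succ r i
    have hle : partialSum r (i + 1) ≤ partialSum c m := by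
      rw [partialSum_self, ← h, ← partialSum_self]
      exact partialSum_mono r i.isLt
    rw [rowSum, ← partialSum_self, partialSum_northwestCorner_row r c i le_rfl]
    omega
  · ext j
    have hsucc := partialSum_succ c j
    have hle : partialSum c (j + 1) ≤ partialSum r n := by
      rw [partialSum_self, h, ← partialSum_self]
      exact partialSum_mono c j.isLt
    rw [colSum, ← partialSum_self, partialSum_northwestCorner_col r c j le_rfl]
    omega

theorem le_northwestCorner_of_agree {E : Lex (Fin m × Fin n) →₀ ℕ} {r : Fin n → ℕ}
    {c : Fin m → ℕ} (hE : HasMargins E r c) (j : Fin m) (i : Fin n)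
    (hagree : ∀ s < toLex (j, i), E s = northwestCorner r c s) :
    E (toLex (j, i)) ≤ northwestCorner r c (toLex (j, i)) := by
  have hrow : partialSum (fun j' ↦ E (toLex (j', i))) j =
      partialSum (fun j' ↦ northwestCorner r c (toLex (j', i))) j :=
    partialSum_congr fun j' hj' ↦ hagree _ (Prod.Lex.toLex_lt_toLex.mpr (Or.inl hj'))
  have hcol : partialSum (fun i' ↦ E (toLex (j, i'))) i =
      partialSum (fun i' ↦ northwestCorner r c (toLex (j, i'))) i :=
    partialSum_congr fun i' hi' ↦ hagree _ (Prod.Lex.toLex_lt_toLex.mpr (Or.inr ⟨rfl, hi'⟩))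
  have hrow_le : partialSum (fun j' ↦ E (toLex (j', i))) (j + 1) ≤ r i := by
    rw [← congrFun hE.1 i, rowSum, ← partialSum_self]
    exact partialSum_mono _ j.isLt
  have hcol_le : partialSum (fun i' ↦ E (toLex (j, i'))) (i + 1) ≤ c j := by
    rw [← congrFun hE.2 j, colSum, ← partialSum_self]
    exact partialSum_mono _ i.isLt
  rw [partialSum_succ, hrow, partialSum_northwestCorner_row r c i j.isLt.le] at hrow_le
  rw [partialSum_succ, hcol, partialSum_northwestCorner_col r c j i.isLt.le] at hcol_le
  have hr := partialSum_succ r i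
  have hc := partialSum_succ c j
  rw [northwestCorner_apply]
  omega

theorem toLex_le_northwestCorner {E : Lex (Fin m × Fin n) →₀ ℕ} {r : Fin n → ℕ}
    {c : Fin m → ℕ} (hE : HasMargins E r c) : toLex E ≤ toLex (northwestCorner r c) := by
  by_contra! h
  obtain ⟨s, hlow, hs⟩ := Finsupp.Lex.lt_iff.mp h
  exact hs.not_ge <| le_northwestCorner_of_agree hE (ofLex s).1 (ofLex s).2
    fun s' hs' ↦ (hlow s' hs').symm

theorem northwestCorner_lt_of_lt {a a' : Fin n →₀ ℕ} (c : Fin m → ℕ) (hlt : toLex a' < toLex a)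
    (hc : ∑ i, a i ≤ ∑ j, c j) :
    toLex (northwestCorner a' c) < toLex (northwestCorner a c) := by
  obtain ⟨i₀, hlow, hi₀⟩ := Finsupp.Lex.lt_iff.mp hlt
  have hR (t : ℕ) (ht : t ≤ i₀) : partialSum a' t = partialSum a t :=
    partialSum_congr fun i hi ↦ hlow i (Fin.lt_def.mpr (by omega))
  have hx : partialSum a' (i₀ + 1) < partialSum a (i₀ + 1) := by
    rw [partialSum_succ, partialSum_succ, hR i₀ le_rfl]
    exact Nat.add_lt_add_left hi₀ _
  have hxc : partialSum a' (i₀ + 1) < partialSum c m := calc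
    partialSum a' (i₀ + 1) < partialSum a (i₀ + 1) := hx
    _ ≤ partialSum a n := partialSum_mono a i₀.isLt
    _ ≤ partialSum c m := by rwa [partialSum_self, partialSum_self]
  obtain ⟨j₀, hj₀, hj₀'⟩ := exists_partialSum_le_lt hxc
  have hR₀ := hR i₀ le_rfl
  have hRmono (f : Fin n → ℕ) (i : Fin n) := partialSum_mono f (Nat.le_add_right i 1)
  have hCmono (j : Fin m) := partialSum_mono c (Nat.le_add_right j 1)
  have agree (j : Fin m) (i : Fin n) (hji : toLex (j, i) < toLex (j₀, i₀)) :
      northwestCorner a' c (toLex (j, i)) = northwestCorner a c (toLex (j, i)) := by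
    rw [northwestCorner_apply, northwestCorner_apply]
    rcases lt_or_ge i i₀ with hi | hi
    · rw [hR i hi.le, hR (i + 1) hi]
    have hj : j < j₀ := by
      rcases Prod.Lex.toLex_lt_toLex.mp hji with hj | ⟨-, hi'⟩
      · exact hj
      · exact absurd hi' hi.not_gt
    have hcj : partialSum c (j + 1) ≤ partialSum c j₀ := partialSum_mono c hj
    have := hRmono a i
    have := hRmono a' i
    have := hCmono j
    rcases hi.lt_or_eq with hi | rfl
    · have := partialSum_mono a' (show (i₀ : ℕ) + 1 ≤ i from hi)
      have := partialSum_mono a (show (i₀ : ℕ) + 1 ≤ i from hi)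
      omega
    · omega
  refine Finsupp.Lex.lt_iff.mpr ⟨toLex (j₀, i₀), fun s hs ↦ agree (ofLex s).1 (ofLex s).2 hs, ?_⟩
  show northwestCorner a' c (toLex (j₀, i₀)) < northwestCorner a c (toLex (j₀, i₀))
  have := hRmono a' i₀
  rw [northwestCorner_apply, northwestCorner_apply]
  omega

end TransportMatrix

section NatPolarization

open TransportMatrix

variable {n m : ℕ}

theorem coeff_Pol_monomial_ne_zero_iff (a : Fin n →₀ ℕ) (κ : Fin m → ℕ)
    (E : Lex (Fin m × Fin n) →₀ ℕ) :
    coeff E (Pol (fun i j ↦ toLex (j, i)) (monomial a (1 : ℕ)) κ) ≠ 0 ↔ HasMargins E a κ := by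
  classical
  obtain ⟨s, rfl⟩ := Multiset.toFinsupp.surjective a
  induction s using Multiset.induction_on generalizing κ E with
  | empty =>
    have hκ : 0 = Finsupp.equivFunOnFinite.symm κ ↔ κ = 0 := by
      rw [eq_comm, Equiv.symm_apply_eq]
      rfl
    by_cases κ = 0 <;> simp_all [Pol, coeff_one, hasMargins_zero_iff, eq_comm]
  | cons i s ih =>
    rw [← Multiset.singleton_add, map_add, Multiset.toFinsupp_singleton, monomial_single_add,
      pow_one, coeff_Pol_X_mul, Ne, Finset.sum_eq_zero_iff]
    simp only [Finset.mem_univ, true_implies, not_forall, ite_ne_right_iff, ih,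
      Finsupp.coe_add, Finsupp.single_eq_pi_single, hasMargins_pi_single_add_iff]

theorem sum_eq_of_Pol_monomial_ne_zero {a : Fin n →₀ ℕ} {κ : Fin m → ℕ}
    (h : Pol (fun i j ↦ toLex (j, i)) (monomial a (1 : ℕ)) κ ≠ 0) : ∑ i, a i = ∑ j, κ j := by
  obtain ⟨E, hE⟩ := ne_zero_iff.mp h
  exact ((coeff_Pol_monomial_ne_zero_iff a κ E).mp hE).sum_eq

theorem leadM_Pol_monomial {a : Fin n →₀ ℕ} {κ : Fin m → ℕ}
    (h : Pol (fun i j ↦ toLex (j, i)) (monomial a (1 : ℕ)) κ ≠ 0) :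
    leadM (Pol (fun i j ↦ toLex (j, i)) (monomial a (1 : ℕ)) κ) =
      toLex (northwestCorner a κ) := by
  refine leadM_eq_of_forall_le ?_ fun E hE ↦ toLex_le_northwestCorner ?_
  · rw [mem_support_iff, coeff_Pol_monomial_ne_zero_iff]
    exact hasMargins_northwestCorner (sum_eq_of_Pol_monomial_ne_zero h)
  · exact (coeff_Pol_monomial_ne_zero_iff a κ E).mp (mem_support_iff.mp hE)

end NatPolarization

/-- over a field of characteristic zero, if `M' < M` are monomials of
`k[x₁,…,xₙ]` in the lex order with `x₁ > ⋯ > xₙ`, then for any `κ ∈ ℕᵐ` with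
`Pol_κ(M) ≠ 0` and `Pol_κ(M') ≠ 0` one has `LeadM(Pol_κ(M')) < LeadM(Pol_κ(M))`
in the lex order on `k[x_i^{(j)}]` with
`x₁^{(1)} > x₂^{(1)} > ⋯ > xₙ^{(1)} > x₁^{(2)} > ⋯ > xₙ^{(m)}` (variables ordered first by
the copy index `j`, then by `i`). -/
theorem leadM_pol_lt_of_lt_alt_order (k : Type) [Field k] [CharZero k] (n m : ℕ)
    (a a' : Fin n →₀ ℕ) (hlt : toLex a' < toLex a) (κ : Fin m → ℕ)
    (hM : Pol (fun i j => toLex (j, i) : Fin n → Fin m → Lex (Fin m × Fin n))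
      (monomial a (1 : k)) κ ≠ 0)
    (hM' : Pol (fun i j => toLex (j, i) : Fin n → Fin m → Lex (Fin m × Fin n))
      (monomial a' (1 : k)) κ ≠ 0) :
    leadM (Pol (fun i j => toLex (j, i) : Fin n → Fin m → Lex (Fin m × Fin n))
        (monomial a' (1 : k)) κ) <
      leadM (Pol (fun i j => toLex (j, i) : Fin n → Fin m → Lex (Fin m × Fin n))
        (monomial a (1 : k)) κ) := by
  have hinj : Function.Injective (Nat.castRingHom k) := Nat.cast_injective
  have hcast (b : Fin n →₀ ℕ) : Pol (fun i j ↦ toLex (j, i)) (monomial b (1 : k)) κ =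
      map (Nat.castRingHom k) (Pol (fun i j ↦ toLex (j, i)) (monomial b 1) κ) := by
    rw [← Pol_map, map_monomial, map_one (Nat.castRingHom k)]
  rw [hcast, map_ne_zero_iff _ (map_injective _ hinj)] at hM hM'
  rw [hcast, hcast, leadM_map_of_injective hinj, leadM_map_of_injective hinj,
    leadM_Pol_monomial hM, leadM_Pol_monomial hM']
  exact TransportMatrix.northwestCorner_lt_of_lt κ hlt (sum_eq_of_Pol_monomial_ne_zero hM).le
end

section
/- Assume char(k) = 0 and let G ≤ S_n be a permutation group acting naturally on V = k^n. Let f ∈ I(G,V) be a nonzero element of the Hilbert ideal. Then for every k = (k_1,…,k_m) ∈ ℕ^m with Pol_k(LeadM(f)) ≠ 0, the leading monomial LeadM(Pol_k(LeadM(f))) belongs to the lead term ideal Lead(I(G,V^m)), where leading monomials in k[V^m] are taken with respect to the lexicographic order with x_1^{(1)} > x_1^{(2)} > … > x_1^{(m)} > x_2^{(1)} > … > x_n^{(m)}. -/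
open MvPolynomial

/-- The lead term ideal of an ideal `I`: the ideal generated by the leading monomials of
all nonzero elements of `I`. -/
noncomputable def leadIdeal {k : Type*} [CommSemiring k] {σ : Type*} [LinearOrder σ]
    (I : Ideal (MvPolynomial σ k)) : Ideal (MvPolynomial σ k) :=
  Ideal.span {p | ∃ f ∈ I, f ≠ 0 ∧ p = monomial (ofLex (leadM f)) (1 : k)}

/-!
Polarizing a monomial gives `Pol_κ(x^μ) = ∑ c_e x^e`, the sum running over the `n × m`
matrices `e` with row sums `μ` and column sums `κ`, with products of multinomial coefficients
`c_e`; these are nonzero because `char k = 0`. In the row-major lexicographic order the largest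
such matrix is the one built by the northwest corner rule, and it even dominates every matrix
with column sums `κ` whose row sums are lexicographically at most `μ`. Writing `f` as a
combination of monomials `x^v` with `v ≤ LeadM(f)`, this shows that `Pol_κ(f)` and
`Pol_κ(LeadM(f))` have the same leading monomial. Finally `Pol_κ(f)` lies in `I(G, V^m)`:
polarization commutes with the diagonal action, kills constant terms, and maps products to
sums of products, so it sends the Hilbert ideal into the Hilbert ideal.
-/

open Finset

section NorthwestCorner

variable (μ κ : ℕ → ℕ)

/-- Entry `(i, j)` of the northwest corner rule: the length of the overlap of `[P i, P (i + 1))`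
and `[Q j, Q (j + 1))`, where `P`, `Q` are the partial sums of `μ`, `κ`. -/
def nwCorner (i j : ℕ) : ℕ :=
  min (∑ s ∈ range (i + 1), μ s) (∑ t ∈ range (j + 1), κ t) -
    max (∑ s ∈ range i, μ s) (∑ t ∈ range j, κ t)

lemma nwCorner_comm (i j : ℕ) : nwCorner μ κ i j = nwCorner κ μ j i := by
  rw [nwCorner, nwCorner, min_comm, max_comm]

lemma sum_range_nwCorner (i j : ℕ) :
    ∑ t ∈ range j, nwCorner μ κ i t =
      min (∑ s ∈ range (i + 1), μ s) (∑ t ∈ range j, κ t) -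
        min (∑ s ∈ range i, μ s) (∑ t ∈ range j, κ t) := by
  induction j with
  | zero => simp
  | succ j ih =>
    rw [sum_range_succ, ih, nwCorner]
    simp only [sum_range_succ]
    omega

lemma nwCorner_eq_min (i j : ℕ) :
    nwCorner μ κ i j =
      min (μ i - ∑ t ∈ range j, nwCorner μ κ i t) (κ j - ∑ s ∈ range i, nwCorner μ κ s j) := by
  simp_rw [nwCorner_comm μ κ _ j, sum_range_nwCorner, nwCorner]
  simp only [sum_range_succ]
  omega

lemma sum_range_nwCorner_of_le {i j : ℕ}
    (h : ∑ s ∈ range (i + 1), μ s ≤ ∑ t ∈ range j, κ t) :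
    ∑ t ∈ range j, nwCorner μ κ i t = μ i := by
  rw [sum_range_nwCorner]
  rw [sum_range_succ] at h ⊢
  omega

end NorthwestCorner

lemma Finsupp.toLex_le_of_forall_lt_eq_imp_le {α N : Type*} [LinearOrder α] [Zero N]
    [LinearOrder N] {a b : α →₀ N} (h : ∀ p, (∀ q < p, a q = b q) → a p ≤ b p) :
    toLex a ≤ toLex b :=
  not_lt.1 fun hlt => by
    obtain ⟨p, hagree, hp⟩ := Finsupp.Lex.lt_iff.1 hlt
    exact (h p fun q hq => (hagree q hq).symm).not_gt hp

lemma Finsupp.le_of_toLex_le_of_forall_lt_eq {α N : Type*} [LinearOrder α] [Zero N]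
    [LinearOrder N] {a b : α →₀ N} (hab : toLex a ≤ toLex b) {p : α}
    (h : ∀ q < p, a q = b q) : a p ≤ b p :=
  not_lt.1 fun hlt => hab.not_gt (Finsupp.Lex.lt_iff.2 ⟨p, fun q hq => (h q hq).symm, hlt⟩)

section Matrix

variable {n m : ℕ}

noncomputable def rowSums (e : Lex (Fin n × Fin m) →₀ ℕ) : Fin n →₀ ℕ :=
  Finsupp.equivFunOnFinite.symm fun i => ∑ j, e (toLex (i, j))

def colSums (e : Lex (Fin n × Fin m) →₀ ℕ) (j : Fin m) : ℕ :=
  ∑ i, e (toLex (i, j))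

lemma rowSums_apply (e : Lex (Fin n × Fin m) →₀ ℕ) (i : Fin n) :
    rowSums e i = ∑ j, e (toLex (i, j)) := rfl

lemma sum_rowSums_eq_sum_colSums (e : Lex (Fin n × Fin m) →₀ ℕ) :
    ∑ i, rowSums e i = ∑ j, colSums e j := by
  simp only [rowSums_apply, colSums]
  exact sum_comm

noncomputable def nwMatrix (μ : Fin n →₀ ℕ) (κ : Fin m → ℕ) : Lex (Fin n × Fin m) →₀ ℕ :=
  Finsupp.equivFunOnFinite.symm fun p =>
    nwCorner (Function.extend Fin.val μ 0) (Function.extend Fin.val κ 0) (ofLex p).1 (ofLex p).2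

lemma nwMatrix_apply (μ : Fin n →₀ ℕ) (κ : Fin m → ℕ) (i : Fin n) (j : Fin m) :
    nwMatrix μ κ (toLex (i, j)) =
      nwCorner (Function.extend Fin.val μ 0) (Function.extend Fin.val κ 0) i j := rfl

lemma sum_range_extend_val (μ : Fin n → ℕ) :
    ∑ s ∈ range n, Function.extend Fin.val μ 0 s = ∑ i, μ i := by
  rw [← Fin.sum_univ_eq_sum_range]
  simp only [Fin.val_injective.extend_apply]

lemma sum_Iio_val {M : Type*} [AddCommMonoid M] (g : ℕ → M) (j : Fin m) :
    ∑ t ∈ Iio j, g t = ∑ t ∈ range j, g t := by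
  rw [← Nat.Iio_eq_range, ← Fin.map_valEmbedding_Iio, sum_map]
  rfl

lemma sum_fin_nwCorner_of_le {μ κ : ℕ → ℕ} (i : ℕ)
    (h : ∑ s ∈ range (i + 1), μ s ≤ ∑ t ∈ range m, κ t) :
    ∑ t : Fin m, nwCorner μ κ i t = μ i := by
  rw [Fin.sum_univ_eq_sum_range (nwCorner μ κ i), sum_range_nwCorner_of_le μ κ h]

lemma rowSums_nwMatrix {μ : Fin n →₀ ℕ} {κ : Fin m → ℕ} (h : ∑ i, μ i ≤ ∑ j, κ j) :
    rowSums (nwMatrix μ κ) = μ := by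
  ext i
  rw [rowSums_apply]
  simp only [nwMatrix_apply]
  rw [sum_fin_nwCorner_of_le, Fin.val_injective.extend_apply]
  rw [sum_range_extend_val]
  exact (sum_le_sum_of_subset (range_subset_range.2 i.isLt)).trans
    ((sum_range_extend_val μ).trans_le h)

lemma colSums_nwMatrix {μ : Fin n →₀ ℕ} {κ : Fin m → ℕ} (h : ∑ j, κ j ≤ ∑ i, μ i) :
    colSums (nwMatrix μ κ) = κ := by
  ext j
  simp only [colSums, nwMatrix_apply, nwCorner_comm _ _ _ (j : ℕ)]
  rw [sum_fin_nwCorner_of_le, Fin.val_injective.extend_apply]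
  rw [sum_range_extend_val]
  exact (sum_le_sum_of_subset (range_subset_range.2 j.isLt)).trans
    ((sum_range_extend_val κ).trans_le h)

lemma add_sum_Iio_le_sum {α : Type*} [Fintype α] [LinearOrder α] [LocallyFiniteOrderBot α]
    (g : α → ℕ) (j : α) : g j + ∑ t ∈ Iio j, g t ≤ ∑ t, g t := by
  rw [← sum_insert notMem_Iio_self, Iio_insert]
  exact sum_le_sum_of_subset (subset_univ _)

lemma toLex_le_nwMatrix {e : Lex (Fin n × Fin m) →₀ ℕ} {μ : Fin n →₀ ℕ} {κ : Fin m → ℕ}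
    (htot : ∑ i, μ i ≤ ∑ j, κ j) (hrow : toLex (rowSums e) ≤ toLex μ) (hcol : colSums e ≤ κ) :
    toLex e ≤ toLex (nwMatrix μ κ) := by
  refine Finsupp.toLex_le_of_forall_lt_eq_imp_le fun p hagree => ?_
  obtain ⟨i, j⟩ := p
  have hprev_row : ∀ s < i, ∀ t, e (toLex (s, t)) = nwMatrix μ κ (toLex (s, t)) :=
    fun s hs t => hagree _ (Prod.Lex.lt_iff.2 (Or.inl hs))
  have hprev_col : ∀ t < j, e (toLex (i, t)) = nwMatrix μ κ (toLex (i, t)) :=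
    fun t ht => hagree _ (Prod.Lex.lt_iff.2 (Or.inr ⟨rfl, ht⟩))
  have hρ : rowSums e i ≤ μ i := by
    refine Finsupp.le_of_toLex_le_of_forall_lt_eq hrow fun s hs => ?_
    rw [rowSums_apply, sum_congr rfl fun t _ => hprev_row s hs t, ← rowSums_apply,
      rowSums_nwMatrix htot]
  have hrow_i := add_sum_Iio_le_sum (fun t => e (toLex (i, t))) j
  have hcol_j := add_sum_Iio_le_sum (fun s => e (toLex (s, j))) i
  rw [sum_congr rfl fun t ht => hprev_col t (mem_Iio.1 ht)] at hrow_i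
  rw [sum_congr rfl fun s hs => hprev_row s (mem_Iio.1 hs) j] at hcol_j
  simp only [nwMatrix_apply] at hrow_i hcol_j
  rw [sum_Iio_val (nwCorner _ _ i) j, ← rowSums_apply] at hrow_i
  rw [sum_Iio_val (fun s => nwCorner _ _ s j) i] at hcol_j
  have hκ := hcol j
  simp only [colSums] at hκ
  -- `e (i, j)` fits into what row `i` and column `j` leave after the earlier entries, and by
  -- `nwCorner_eq_min` the northwest corner rule fills exactly that.
  show e (toLex (i, j)) ≤ nwMatrix μ κ (toLex (i, j))
  rw [nwMatrix_apply, nwCorner_eq_min, Fin.val_injective.extend_apply,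
    Fin.val_injective.extend_apply]
  omega

end Matrix

section LeadM

variable {R σ : Type*} [CommSemiring R] [LinearOrder σ] {f : MvPolynomial σ R}

lemma toLex_le_leadM {e : σ →₀ ℕ} (he : e ∈ f.support) : toLex e ≤ leadM f := by
  let : DecidableEq (Lex (σ →₀ ℕ)) := Classical.decEq _
  obtain ⟨b, hb⟩ := Finset.max_of_mem (mem_image_of_mem toLex he)
  rw [leadM, hb]
  exact Finset.le_max_of_eq (mem_image_of_mem _ he) hb

lemma ofLex_leadM_mem_support (hf : f ≠ 0) : ofLex (leadM f) ∈ f.support := by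
  let : DecidableEq (Lex (σ →₀ ℕ)) := Classical.decEq _
  obtain ⟨b, hb⟩ := Finset.max_of_nonempty ((support_nonempty.2 hf).image toLex)
  obtain ⟨e, he, rfl⟩ := mem_image.1 (Finset.mem_of_max hb)
  rw [leadM, hb]
  exact he

lemma leadM_eq_of_forall_le_s6 {w : σ →₀ ℕ} (hw : w ∈ f.support)
    (h : ∀ e ∈ f.support, toLex e ≤ toLex w) : leadM f = toLex w :=
  le_antisymm (h _ (ofLex_leadM_mem_support (by rintro rfl; simp at hw))) (toLex_le_leadM hw)

lemma leadM_monomial {v : σ →₀ ℕ} {c : R} (hc : c ≠ 0) : leadM (monomial v c) = toLex v := by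
  classical
  refine leadM_eq_of_forall_le_s6 (by simp [support_monomial, hc]) fun e he => ?_
  rw [support_monomial, if_neg hc, mem_singleton] at he
  rw [he]

end LeadM

section Polarization

variable {k σ : Type*} {n m : ℕ}

lemma algHom_pol [CommSemiring k] {A : Type*} [CommSemiring A] [Algebra k A]
    (φ : MvPolynomial σ k →ₐ[k] A) (emb : Fin n → Fin m → σ) (h : MvPolynomial (Fin n) k)
    (κ : Fin m → ℕ) :
    φ (Pol emb h κ) = coeff (Finsupp.equivFunOnFinite.symm κ)
      (aeval (fun i => ∑ j, C (φ (X (emb i j))) * X j : Fin n → MvPolynomial (Fin m) A) h) := by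
  have hcomp := DFunLike.congr_fun (comp_aeval (R := k)
    (fun i => ∑ j, (C (X (emb i j)) * X j : MvPolynomial (Fin m) (MvPolynomial σ k)))
    (mapAlgHom φ)) h
  simp only [AlgHom.comp_apply, map_sum, map_mul, mapAlgHom_apply, map_C, map_X,
    RingHom.coe_coe] at hcomp
  rw [Pol, ← hcomp, coeff_map]
  rfl

lemma rename_pol [CommSemiring k] {τ : Type*} (ψ : σ → τ) (emb : Fin n → Fin m → σ)
    (h : MvPolynomial (Fin n) k) (κ : Fin m → ℕ) :
    rename ψ (Pol emb h κ) = Pol (fun i j => ψ (emb i j)) h κ := by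
  rw [algHom_pol]
  simp only [rename_X]
  rfl

lemma pol_rename [CommSemiring k] (g : Fin n → Fin n) (emb : Fin n → Fin m → σ)
    (h : MvPolynomial (Fin n) k) (κ : Fin m → ℕ) :
    Pol emb (rename g h) κ = Pol (fun i j => emb (g i) j) h κ := by
  rw [Pol, aeval_rename]
  rfl

lemma constantCoeff_pol [CommSemiring k] (emb : Fin n → Fin m → σ)
    {h : MvPolynomial (Fin n) k} (hh : constantCoeff h = 0) (κ : Fin m → ℕ) :
    constantCoeff (Pol emb h κ) = 0 := by
  have hF : (fun i => ∑ j, C (aeval (0 : σ → k) (X (emb i j) : MvPolynomial σ k)) * X j :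
      Fin n → MvPolynomial (Fin m) k) = 0 := by
    ext1 i
    simp
  have := algHom_pol (aeval (0 : σ → k)) emb h κ
  rwa [hF, aeval_zero, aeval_zero, hh, map_zero, coeff_zero] at this

lemma pol_eq_sum_smul [CommSemiring k] (emb : Fin n → Fin m → σ) (f : MvPolynomial (Fin n) k)
    (κ : Fin m → ℕ) :
    Pol emb f κ = ∑ v ∈ f.support, coeff v f • Pol emb (monomial v 1) κ := by
  have hmono : ∀ v, monomial v (coeff v f) = coeff v f • monomial v (1 : k) := fun v => by
    rw [smul_monomial, smul_eq_mul, mul_one]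
  conv_lhs => rw [f.as_sum]
  simp only [Pol, map_sum, coeff_sum, hmono, map_smul, coeff_smul]

lemma pol_mem_of_mem_span [CommRing k] {emb : Fin n → Fin m → σ}
    {S : Set (MvPolynomial (Fin n) k)} {J : Ideal (MvPolynomial σ k)}
    (hS : ∀ h ∈ S, ∀ κ, Pol emb h κ ∈ J) {f : MvPolynomial (Fin n) k} (hf : f ∈ Ideal.span S)
    (κ : Fin m → ℕ) : Pol emb f κ ∈ J := by
  suffices Ideal.span S ≤ (Ideal.map C J).comap
      (aeval fun i => ∑ j, (C (X (emb i j)) * X j : MvPolynomial (Fin m) (MvPolynomial σ k)))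
    from mem_map_C_iff.1 (this hf) _
  refine Ideal.span_le.2 fun h hh => mem_map_C_iff.2 fun d => ?_
  simpa [Pol] using hS h hh d

end Polarization

section MonomialPolarization

variable {R : Type*} [CommSemiring R] {n m : ℕ}

lemma prod_X_pow_eq_monomial_of_fintype {σ : Type*} [Fintype σ] (s : σ →₀ ℕ) :
    ∏ p, (X p : MvPolynomial σ R) ^ s p = monomial s 1 := by
  rw [monomial_eq, C_1, one_mul, Finsupp.prod_pow]

lemma sum_C_mul_X_pow {ι : Type*} [Fintype ι] [DecidableEq ι] (c : ι → R) (r : ℕ) :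
    (∑ j, C (c j) * X j : MvPolynomial ι R) ^ r =
      ∑ d ∈ piAntidiag univ r,
        monomial (Finsupp.equivFunOnFinite.symm d) (Nat.multinomial univ d * ∏ j, c j ^ d j) := by
  rw [sum_pow_eq_sum_piAntidiag]
  refine sum_congr rfl fun d _ => ?_
  have hX : ∏ j, (X j : MvPolynomial ι R) ^ d j =
      monomial (Finsupp.equivFunOnFinite.symm d) 1 := by
    rw [← prod_X_pow_eq_monomial_of_fintype]
    rfl
  simp_rw [mul_pow, prod_mul_distrib, ← map_pow, ← map_prod, hX, ← map_natCast C, ← mul_assoc,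
    ← map_mul, C_mul_monomial, mul_one]

lemma prod_natCast_mul_prod_X_pow (a : Fin n → ℕ) (D : Fin n → Fin m → ℕ) :
    ∏ i, ((a i : MvPolynomial (Lex (Fin n × Fin m)) R) * ∏ j, X (toLex (i, j)) ^ D i j) =
      monomial
        (Finsupp.equivFunOnFinite.symm fun p : Lex (Fin n × Fin m) => D (ofLex p).1 (ofLex p).2)
        ((∏ i, a i : ℕ) : R) := by
  rw [prod_mul_distrib, monomial_eq, Finsupp.prod_pow,
    ← Fintype.prod_equiv toLex (fun q => X (toLex q) ^ D q.1 q.2) _ fun _ => rfl,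
    Fintype.prod_prod_type, Nat.cast_prod, map_prod]
  simp_rw [map_natCast]

lemma pol_monomial_eq_sum (μ : Fin n →₀ ℕ) (κ : Fin m → ℕ) :
    Pol (fun i j => toLex (i, j)) (monomial μ (1 : R)) κ =
      ∑ D ∈ Fintype.piFinset fun i => piAntidiag univ (μ i),
        if ∑ i, Finsupp.equivFunOnFinite.symm (D i) = Finsupp.equivFunOnFinite.symm κ then
          monomial (Finsupp.equivFunOnFinite.symm fun p => D (ofLex p).1 (ofLex p).2)
            ((∏ i, Nat.multinomial univ (D i) : ℕ) : R)
        else 0 := by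
  rw [Pol, aeval_monomial, map_one, one_mul, Finsupp.prod_pow]
  simp_rw [sum_C_mul_X_pow]
  rw [prod_univ_sum, coeff_sum]
  refine sum_congr rfl fun D _ => ?_
  rw [← monomial_sum_prod, coeff_monomial, prod_natCast_mul_prod_X_pow]

lemma coeff_pol_monomial (μ : Fin n →₀ ℕ) (κ : Fin m → ℕ) (e : Lex (Fin n × Fin m) →₀ ℕ) :
    coeff e (Pol (fun i j => toLex (i, j)) (monomial μ (1 : R)) κ) =
      if rowSums e = μ ∧ colSums e = κ then
        ((∏ i, Nat.multinomial univ fun j => e (toLex (i, j)) : ℕ) : R)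
      else 0 := by
  classical
  have hmat : ∀ D : Fin n → Fin m → ℕ,
      (Finsupp.equivFunOnFinite.symm fun p : Lex (Fin n × Fin m) => D (ofLex p).1 (ofLex p).2)
        = e ↔ (fun i j => e (toLex (i, j))) = D := fun D => by
    constructor
    · rintro rfl
      rfl
    · rintro rfl
      ext
      rfl
  rw [pol_monomial_eq_sum, coeff_sum]
  simp_rw [apply_ite (coeff e), coeff_monomial, coeff_zero, hmat, ← ite_and]
  simp_rw [and_comm (b := (fun i j => e (toLex (i, j))) = _), ite_and, sum_ite_eq,
    ← ite_and]
  refine if_congr ?_ rfl rfl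
  simp [Finsupp.ext_iff, funext_iff, rowSums_apply, colSums, Finsupp.finsetSum_apply]

end MonomialPolarization

section LeadingMonomial

variable {R : Type*} [CommSemiring R] {n m : ℕ}

lemma coeff_pol (f : MvPolynomial (Fin n) R) (κ : Fin m → ℕ) (e : Lex (Fin n × Fin m) →₀ ℕ) :
    coeff e (Pol (fun i j => toLex (i, j)) f κ) =
      coeff (rowSums e) f *
        coeff e (Pol (fun i j => toLex (i, j)) (monomial (rowSums e) 1) κ) := by
  rw [pol_eq_sum_smul, coeff_sum]
  simp_rw [coeff_smul, smul_eq_mul]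
  refine sum_eq_single _ (fun v _ hv => ?_) fun hv => by rw [notMem_support_iff.1 hv, zero_mul]
  rw [coeff_pol_monomial, if_neg fun h => hv h.1.symm, mul_zero]

variable [CharZero R]

lemma mem_support_pol_monomial_iff {μ : Fin n →₀ ℕ} {κ : Fin m → ℕ}
    {e : Lex (Fin n × Fin m) →₀ ℕ} :
    e ∈ (Pol (fun i j => toLex (i, j)) (monomial μ (1 : R)) κ).support ↔
      rowSums e = μ ∧ colSums e = κ := by
  rw [mem_support_iff, coeff_pol_monomial]
  split_ifs with h
  · exact iff_of_true (Nat.cast_ne_zero.2 (prod_ne_zero_iff.2 fun i _ =>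
      (Nat.multinomial_pos _ _).ne')) h
  · exact iff_of_false (not_not.2 rfl) h

lemma sum_eq_sum_of_pol_monomial_ne_zero {μ : Fin n →₀ ℕ} {κ : Fin m → ℕ}
    (h : Pol (fun i j => toLex (i, j)) (monomial μ (1 : R)) κ ≠ 0) : ∑ i, μ i = ∑ j, κ j := by
  obtain ⟨e, he⟩ := support_nonempty.2 h
  obtain ⟨hrow, hcol⟩ := mem_support_pol_monomial_iff.1 he
  rw [← hrow, ← hcol, sum_rowSums_eq_sum_colSums]

variable [NoZeroDivisors R] {f : MvPolynomial (Fin n) R} {κ : Fin m → ℕ}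

lemma coeff_nwMatrix_pol_ne_zero (hf : f ≠ 0) (hdeg : ∑ i, ofLex (leadM f) i = ∑ j, κ j) :
    coeff (nwMatrix (ofLex (leadM f)) κ) (Pol (fun i j => toLex (i, j)) f κ) ≠ 0 := by
  have hW : rowSums (nwMatrix (ofLex (leadM f)) κ) = ofLex (leadM f) ∧
      colSums (nwMatrix (ofLex (leadM f)) κ) = κ :=
    ⟨rowSums_nwMatrix hdeg.le, colSums_nwMatrix hdeg.ge⟩
  rw [coeff_pol, hW.1]
  exact mul_ne_zero (mem_support_iff.1 (ofLex_leadM_mem_support hf))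
    (mem_support_iff.1 (mem_support_pol_monomial_iff.2 hW))

lemma leadM_pol (hf : f ≠ 0) (hdeg : ∑ i, ofLex (leadM f) i = ∑ j, κ j) :
    leadM (Pol (fun i j => toLex (i, j)) f κ) = toLex (nwMatrix (ofLex (leadM f)) κ) := by
  refine leadM_eq_of_forall_le_s6 (mem_support_iff.2 (coeff_nwMatrix_pol_ne_zero hf hdeg))
    fun e he => ?_
  rw [mem_support_iff, coeff_pol] at he
  have hrow : toLex (rowSums e) ≤ leadM f :=
    toLex_le_leadM (mem_support_iff.2 (left_ne_zero_of_mul he))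
  have hcol : colSums e = κ :=
    (mem_support_pol_monomial_iff.1 (mem_support_iff.2 (right_ne_zero_of_mul he))).2
  exact toLex_le_nwMatrix hdeg.le hrow hcol.le

end LeadingMonomial

lemma pol_mem_span_invariants {k : Type*} [CommRing k] {n m : ℕ}
    (G : Subgroup (Equiv.Perm (Fin n))) {f : MvPolynomial (Fin n) k}
    (hf : f ∈ Ideal.span {h : MvPolynomial (Fin n) k |
      (∀ g ∈ G, rename (fun i => g⁻¹ i) h = h) ∧ constantCoeff h = 0})
    (κ : Fin m → ℕ) :
    Pol (fun i j => toLex (i, j) : Fin n → Fin m → Lex (Fin n × Fin m)) f κ ∈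
      Ideal.span {h : MvPolynomial (Lex (Fin n × Fin m)) k |
        (∀ g ∈ G, rename
          (fun p : Lex (Fin n × Fin m) => toLex (g⁻¹ (ofLex p).1, (ofLex p).2)) h = h) ∧
        constantCoeff h = 0} := by
  refine pol_mem_of_mem_span (fun h hh κ => ?_) hf κ
  refine Ideal.subset_span ⟨fun g hg => ?_, constantCoeff_pol _ hh.2 κ⟩
  calc rename (fun p : Lex (Fin n × Fin m) => toLex (g⁻¹ (ofLex p).1, (ofLex p).2))
        (Pol (fun i j => toLex (i, j)) h κ)
      = Pol (fun i j => toLex (g⁻¹ i, j)) h κ := rename_pol _ _ h κ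
    _ = Pol (fun i j => toLex (i, j)) (rename (fun i => g⁻¹ i) h) κ :=
        (pol_rename _ _ h κ).symm
    _ = Pol (fun i j => toLex (i, j)) h κ := by rw [hh.1 g hg]

/-- `char k = 0`, `G ≤ Sₙ` a permutation group acting naturally on `V = kⁿ`
and diagonally on `Vᵐ`. For a nonzero `f` in the Hilbert ideal `I(G,V)` and any `κ ∈ ℕᵐ`
with `Pol_κ(LeadM(f)) ≠ 0`, the leading monomial of `Pol_κ(LeadM(f))` lies in the lead term
ideal `Lead(I(G,Vᵐ))`. Leading monomials in `k[V]` use lex with `x₁ > ⋯ > xₙ`, those in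
`k[Vᵐ]` use lex with `x₁^{(1)} > x₁^{(2)} > ⋯ > x₁^{(m)} > x₂^{(1)} > ⋯ > xₙ^{(m)}`. -/
theorem leadM_pol_leadM_mem_leadIdeal (k : Type) [Field k] [CharZero k] (n m : ℕ)
    (G : Subgroup (Equiv.Perm (Fin n)))
    (f : MvPolynomial (Fin n) k) (hf0 : f ≠ 0)
    (hf : f ∈ Ideal.span {h : MvPolynomial (Fin n) k |
      (∀ g ∈ G, rename (fun i => g⁻¹ i) h = h) ∧ constantCoeff h = 0})
    (κ : Fin m → ℕ)
    (hpol : Pol (fun i j => toLex (i, j) : Fin n → Fin m → Lex (Fin n × Fin m))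
      (monomial (ofLex (leadM f)) (1 : k)) κ ≠ 0) :
    monomial
        (ofLex (leadM (Pol (fun i j => toLex (i, j) : Fin n → Fin m → Lex (Fin n × Fin m))
          (monomial (ofLex (leadM f)) (1 : k)) κ))) (1 : k) ∈
      leadIdeal (Ideal.span {h : MvPolynomial (Lex (Fin n × Fin m)) k |
        (∀ g ∈ G, rename
          (fun p : Lex (Fin n × Fin m) => toLex (g⁻¹ (ofLex p).1, (ofLex p).2)) h = h) ∧
        constantCoeff h = 0}) := by
  have hdeg : ∑ i, ofLex (leadM f) i = ∑ j, κ j := sum_eq_sum_of_pol_monomial_ne_zero hpol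
  have hlead : leadM (monomial (ofLex (leadM f)) (1 : k)) = leadM f :=
    leadM_monomial one_ne_zero
  refine Ideal.subset_span ⟨_, pol_mem_span_invariants G hf κ,
    support_nonempty.1 ⟨_, mem_support_iff.2 (coeff_nwMatrix_pol_ne_zero hf0 hdeg)⟩, ?_⟩
  rw [leadM_pol hf0 hdeg, leadM_pol (monomial_eq_zero.not.2 one_ne_zero) (by rwa [hlead]),
    hlead]
end

section
/- Let G be a finite group acting linearly and degree-preservingly on a polynomial ring k[W] over a field k with |G| invertible in k. If the Hilbert ideal I(G,W) is generated by G-invariant homogeneous polynomials f_1,…,f_s of degree at most d, then the invariant ring k[W]^G is generated as a k-algebra by its homogeneous elements of degree at most d, i.e., β(G,W) ≤ d. -/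
/-!
Induct on the degree `n` of a homogeneous invariant `p`. If `n > 0` then `p` lies in the
Hilbert ideal, so `p = ∑ cᵢ fᵢ`; applying the Reynolds operator `|G|⁻¹ Tr` we may take the
`cᵢ` invariant. Comparing degree-`n` components, `p = ∑ cᵢ' fᵢ` with `cᵢ'` the homogeneous
component of `cᵢ` of degree `n - deg fᵢ < n`, which is again invariant because the action
preserves degrees; by induction `cᵢ'` is a polynomial in invariants of degree `≤ d`, and so
is `fᵢ`.
-/

open MvPolynomial

namespace MvPolynomial

variable {R σ τ F : Type*} [CommSemiring R] [FunLike F (MvPolynomial σ R) (MvPolynomial τ R)]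
  [AlgHomClass F R (MvPolynomial σ R) (MvPolynomial τ R)] {φ : F}

theorem IsHomogeneous.map_of_isHomogeneous_X (hφ : ∀ i, (φ (X i)).IsHomogeneous 1)
    {p : MvPolynomial σ R} {n : ℕ} (hp : p.IsHomogeneous n) : (φ p).IsHomogeneous n := by
  have hφ_eq : φ p = MvPolynomial.aeval (φ ∘ X) p := by
    simpa using congr($(aeval_unique (AlgHomClass.toAlgHom φ)) p)
  rw [hφ_eq]
  simpa only [one_mul] using hp.aeval (φ ∘ X) hφ

theorem homogeneousComponent_map_of_isHomogeneous_X (hφ : ∀ i, (φ (X i)).IsHomogeneous 1)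
    (n : ℕ) (p : MvPolynomial σ R) :
    φ (homogeneousComponent n p) = homogeneousComponent n (φ p) := by
  induction p using MvPolynomial.induction_on' with
  | monomial d c =>
    have hd : (monomial d c).IsHomogeneous d.degree := isHomogeneous_monomial c rfl
    rw [homogeneousComponent_of_mem hd,
      homogeneousComponent_of_mem (hd.map_of_isHomogeneous_X hφ)]
    split_ifs <;> simp
  | add p q hp hq => simp [hp, hq]

theorem homogeneousComponent_add_mul_of_isHomogeneous {f : MvPolynomial σ R} {m : ℕ}
    (hf : f.IsHomogeneous m) (j : ℕ) (c : MvPolynomial σ R) :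
    homogeneousComponent (j + m) (c * f) = homogeneousComponent j c * f := by
  induction c using MvPolynomial.induction_on' with
  | monomial d a =>
    have hd : (monomial d a).IsHomogeneous d.degree := isHomogeneous_monomial a rfl
    rw [homogeneousComponent_of_mem hd, homogeneousComponent_of_mem (hd.mul hf)]
    split_ifs <;> simp_all
  | add p q hp hq => simp [add_mul, hp, hq]

theorem homogeneousComponent_mul_of_isHomogeneous_of_lt {f : MvPolynomial σ R} {m n : ℕ}
    (hf : f.IsHomogeneous m) (hn : n < m) (c : MvPolynomial σ R) :
    homogeneousComponent n (c * f) = 0 := by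
  induction c using MvPolynomial.induction_on' with
  | monomial d a =>
    rw [homogeneousComponent_of_mem ((isHomogeneous_monomial a rfl).mul hf), if_neg (by omega)]
  | add p q hp hq => simp [add_mul, hp, hq]

theorem IsHomogeneous.eq_zero_of_constantCoeff_eq_zero {p : MvPolynomial σ R}
    (hp : p.IsHomogeneous 0) (h0 : constantCoeff p = 0) : p = 0 := by
  rw [← homogeneousComponent_eq_self hp, homogeneousComponent_zero, ← constantCoeff_eq, h0,
    map_zero]

end MvPolynomial

section Transfer

variable {k A G : Type*} [CommSemiring k] [Semiring A] [Algebra k A] [Group G] [Fintype G]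

def transfer (ρ : G →* (A ≃ₐ[k] A)) : A →ₗ[k] A := ∑ g, (ρ g).toLinearMap

variable (ρ : G →* (A ≃ₐ[k] A))

theorem transfer_apply (a : A) : transfer ρ a = ∑ g, ρ g a := by
  simp [transfer]

theorem map_transfer (a : A) (h : G) : ρ h (transfer ρ a) = transfer ρ a := by
  rw [transfer_apply, map_sum]
  exact Fintype.sum_equiv (Equiv.mulLeft h) _ _ fun g => by simp [map_mul]

theorem transfer_mul_of_invariant (a : A) {b : A} (hb : ∀ g, ρ g b = b) :
    transfer ρ (a * b) = transfer ρ a * b := by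
  simp [transfer_apply, hb, Finset.sum_mul]

theorem transfer_of_invariant {a : A} (ha : ∀ g, ρ g a = a) :
    transfer ρ a = Fintype.card G • a := by
  simp [transfer_apply, ha]

theorem exists_invariant_coeffs_of_mem_span {ι : Type*} [Fintype ι]
    (hG : IsUnit (Fintype.card G : k)) {f : ι → A} (hf : ∀ i g, ρ g (f i) = f i) {p : A}
    (hp : ∀ g, ρ g p = p) (hmem : p ∈ Ideal.span (Set.range f)) :
    ∃ c : ι → A, (∀ i g, ρ g (c i) = c i) ∧ ∑ i, c i * f i = p := by
  obtain ⟨c, rfl⟩ := Ideal.mem_span_range_iff_exists_fun.mp hmem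
  refine ⟨fun i => ((hG.unit⁻¹ : kˣ) : k) • transfer ρ (c i), fun i g => ?_, ?_⟩
  · rw [map_smul, map_transfer]
  · simp_rw [smul_mul_assoc, ← Finset.smul_sum, ← transfer_mul_of_invariant ρ _ (hf _),
      ← map_sum, transfer_of_invariant ρ hp, ← Nat.cast_smul_eq_nsmul k, smul_smul]
    simp

end Transfer

section HilbertIdeal

variable {k σ G : Type*} [CommSemiring k] [Group G]
  (ρ : G →* (MvPolynomial σ k ≃ₐ[k] MvPolynomial σ k))

noncomputable def hilbertIdeal : Ideal (MvPolynomial σ k) :=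
  Ideal.span {h | (∀ g, ρ g h = h) ∧ constantCoeff h = 0}

variable {ρ}

theorem constantCoeff_eq_zero_of_mem_hilbertIdeal {p : MvPolynomial σ k}
    (hp : p ∈ hilbertIdeal ρ) : constantCoeff p = 0 :=
  (Ideal.span_le (I := RingHom.ker constantCoeff)).mpr (fun _ hq => hq.2) hp

theorem map_homogeneousComponent_of_invariant (hlin : ∀ g i, (ρ g (X i)).IsHomogeneous 1)
    {p : MvPolynomial σ k} (hp : ∀ g, ρ g p = p) (n : ℕ) (g : G) :
    ρ g (homogeneousComponent n p) = homogeneousComponent n p := by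
  rw [homogeneousComponent_map_of_isHomogeneous_X (hlin g), hp]

theorem mem_adjoin_of_isHomogeneous_of_invariant [Fintype G]
    (hlin : ∀ g i, (ρ g (X i)).IsHomogeneous 1) (hG : IsUnit (Fintype.card G : k))
    {ι : Type*} [Fintype ι] {d : ℕ} {f : ι → MvPolynomial σ k}
    (hfinv : ∀ i g, ρ g (f i) = f i) (hfhom : ∀ i, ∃ e ≤ d, (f i).IsHomogeneous e)
    (hspan : Ideal.span (Set.range f) = hilbertIdeal ρ) {n : ℕ} {p : MvPolynomial σ k}
    (hp : p.IsHomogeneous n) (hpinv : ∀ g, ρ g p = p) :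
    p ∈ Algebra.adjoin k {q | (∀ g, ρ g q = q) ∧ ∃ e ≤ d, q.IsHomogeneous e} := by
  induction n using Nat.strong_induction_on generalizing p with | _ n ih =>
  rcases Nat.eq_zero_or_pos n with rfl | hn
  · rw [← homogeneousComponent_eq_self hp, homogeneousComponent_zero, ← algebraMap_eq]
    exact Subalgebra.algebraMap_mem _ _
  have hp0 : constantCoeff p = 0 := by
    rw [constantCoeff_eq]
    exact hp.coeff_eq_zero (by simpa using hn.ne)
  obtain ⟨c, hcinv, rfl⟩ := exists_invariant_coeffs_of_mem_span ρ hG hfinv hpinv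
    (hspan ▸ Ideal.subset_span ⟨hpinv, hp0⟩)
  rw [← homogeneousComponent_eq_self hp, map_sum]
  refine Subalgebra.sum_mem _ fun i _ => ?_
  obtain ⟨e, hed, hfe⟩ := hfhom i
  have hf0 : constantCoeff (f i) = 0 :=
    constantCoeff_eq_zero_of_mem_hilbertIdeal (hspan ▸ Ideal.subset_span (Set.mem_range_self i))
  rcases Nat.eq_zero_or_pos e with rfl | he
  · simp [hfe.eq_zero_of_constantCoeff_eq_zero hf0]
  rcases lt_or_ge n e with hne | hen
  · simp [homogeneousComponent_mul_of_isHomogeneous_of_lt hfe hne]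
  obtain ⟨j, rfl⟩ := Nat.exists_eq_add_of_le' hen
  rw [homogeneousComponent_add_mul_of_isHomogeneous hfe]
  exact mul_mem (ih j (by omega) (homogeneousComponent_isHomogeneous j _)
    (map_homogeneousComponent_of_invariant hlin (hcinv i) j))
    (Algebra.subset_adjoin ⟨hfinv i, e, hed, hfe⟩)

end HilbertIdeal

theorem beta_le_of_hilbert_ideal_generators_general (k : Type) [Field k] (σ : Type)
    (G : Type) [Group G] [Fintype G]
    (ρ : G →* (MvPolynomial σ k ≃ₐ[k] MvPolynomial σ k))
    (hlin : ∀ (g : G) (i : σ), (ρ g (X i)).IsHomogeneous 1)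
    (hcard : IsUnit ((Fintype.card G : k)))
    (d s : ℕ) (f : Fin s → MvPolynomial σ k)
    (hfinv : ∀ (i : Fin s) (g : G), ρ g (f i) = f i)
    (hfhom : ∀ i : Fin s, ∃ e ≤ d, (f i).IsHomogeneous e)
    (hspan : Ideal.span (Set.range f) =
      Ideal.span {h : MvPolynomial σ k | (∀ g : G, ρ g h = h) ∧ constantCoeff h = 0}) :
    ∀ h : MvPolynomial σ k, (∀ g : G, ρ g h = h) →
      h ∈ Algebra.adjoin k {p : MvPolynomial σ k |
        (∀ g : G, ρ g p = p) ∧ ∃ e ≤ d, p.IsHomogeneous e} := by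
  intro h hinv
  rw [← sum_homogeneousComponent h]
  exact Subalgebra.sum_mem _ fun n _ =>
    mem_adjoin_of_isHomogeneous_of_invariant hlin hcard hfinv hfhom hspan
      (homogeneousComponent_isHomogeneous n h) (map_homogeneousComponent_of_invariant hlin hinv n)

/-- let a finite group `G` act linearly (each `g` sends every variable to a
homogeneous polynomial of degree `1`) by `k`-algebra automorphisms on a polynomial ring
`k[W]`, with `|G|` invertible in `k`. If the Hilbert ideal `I(G,W)` (the ideal generated by
the invariants with zero constant term) is generated by `G`-invariant homogeneous
polynomials `f₁,…,f_s` of degree at most `d`, then every invariant lies in the `k`-algebra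
generated by the invariant homogeneous elements of degree at most `d`, i.e. `β(G,W) ≤ d`. -/
theorem beta_le_of_hilbert_ideal_generators (k : Type) [Field k] (σ : Type) [Fintype σ]
    (G : Type) [Group G] [Fintype G]
    (ρ : G →* (MvPolynomial σ k ≃ₐ[k] MvPolynomial σ k))
    (hlin : ∀ (g : G) (i : σ), (ρ g (X i)).IsHomogeneous 1)
    (hcard : IsUnit ((Fintype.card G : k)))
    (d s : ℕ) (f : Fin s → MvPolynomial σ k)
    (hfinv : ∀ (i : Fin s) (g : G), ρ g (f i) = f i)
    (hfhom : ∀ i : Fin s, ∃ e ≤ d, (f i).IsHomogeneous e)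
    (hspan : Ideal.span (Set.range f) =
      Ideal.span {h : MvPolynomial σ k | (∀ g : G, ρ g h = h) ∧ constantCoeff h = 0}) :
    ∀ h : MvPolynomial σ k, (∀ g : G, ρ g h = h) →
      h ∈ Algebra.adjoin k {p : MvPolynomial σ k |
        (∀ g : G, ρ g p = p) ∧ ∃ e ≤ d, p.IsHomogeneous e} :=
  beta_le_of_hilbert_ideal_generators_general k σ G ρ hlin hcard d s f hfinv hfhom hspan
end
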